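/- For the single-qubit depolarizing Kraus family with parameters p_x, p_y, p_z ≥ 0 satisfying p_x + p_y > 0 and p = p_x + p_y + p_z < 1, and any ω ∈ ℝ, the infimum over 4×4 Hermitian matrices h of 4‖α(h)‖ equals 1 − 4( p_x p_y/(p_x + p_y) + (1−p) p_z/(1 − p + p_z) ). -/

import Mathlib

open Matrix

noncomputable def opNorm {m n : Type*} [Fintype m] [Fintype n] [DecidableEq n]
    (A : Matrix m n ℂ) : ℝ :=
  ‖LinearMap.toContinuousLinearMap (Matrix.toEuclideanLin A)‖

noncomputable def krausAlpha {d d' r : ℕ} (K Kd : Fin r → Matrix (Fin d') (Fin d) ℂ)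
    (h : Matrix (Fin r) (Fin r) ℂ) : Matrix (Fin d) (Fin d) ℂ :=
  ∑ i, (Kd i - Complex.I • ∑ j, h i j • K j)ᴴ * (Kd i - Complex.I • ∑ j, h i j • K j)

noncomputable def krausBeta {d d' r : ℕ} (K Kd : Fin r → Matrix (Fin d') (Fin d) ℂ)
    (h : Matrix (Fin r) (Fin r) ℂ) : Matrix (Fin d) (Fin d) ℂ :=
  (Complex.I • ∑ i, (K i)ᴴ * Kd i) + ∑ i, ∑ j, h i j • ((K i)ᴴ * K j)

def pauliX : Matrix (Fin 2) (Fin 2) ℂ := !![0, 1; 1, 0]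
noncomputable def pauliY : Matrix (Fin 2) (Fin 2) ℂ := !![0, -Complex.I; Complex.I, 0]
def pauliZ : Matrix (Fin 2) (Fin 2) ℂ := !![1, 0; 0, -1]

noncomputable def Rz (ω : ℝ) : Matrix (Fin 2) (Fin 2) ℂ :=
  !![Complex.exp (-(Complex.I * ω / 2)), 0; 0, Complex.exp (Complex.I * ω / 2)]

noncomputable def depolK (px py pz ω : ℝ) : Fin 4 → Matrix (Fin 2) (Fin 2) ℂ :=
  ![(Real.sqrt (1 - (px + py + pz)) : ℂ) • Rz ω,
    (Real.sqrt px : ℂ) • (pauliX * Rz ω),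
    (Real.sqrt py : ℂ) • (pauliY * Rz ω),
    (Real.sqrt pz : ℂ) • (pauliZ * Rz ω)]

noncomputable def depolKdot (px py pz ω : ℝ) : Fin 4 → Matrix (Fin 2) (Fin 2) ℂ :=
  ![(-(Complex.I / 2) * (Real.sqrt (1 - (px + py + pz)) : ℂ)) • (pauliZ * Rz ω),
    (-(1 / 2 : ℂ) * (Real.sqrt px : ℂ)) • (pauliY * Rz ω),
    ((1 / 2 : ℂ) * (Real.sqrt py : ℂ)) • (pauliX * Rz ω),
    (-(Complex.I / 2) * (Real.sqrt pz : ℂ)) • Rz ω]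

/-! In the frame `Uⱼ = Pⱼ R` with `P = (1, σ_x, σ_y, σ_z)` the family reads `Kⱼ = sⱼ Uⱼ` and
`K̇ᵢ = -i ∑ⱼ mᵢⱼ Uⱼ`, so `α(h) = ∑ᵢ Cᵢᴴ Cᵢ` with `Cᵢ = ∑ⱼ Gᵢⱼ Uⱼ` and `G = h diag(s) + m`.
The frame is orthogonal for the trace form, hence `‖α(h)‖ ≥ tr α(h) / 2 = ∑ |Gᵢⱼ|²`.
For Hermitian `h` the pairs of entries `(0,3), (3,0)` and `(1,2), (2,1)` of `G` are bounded below by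
`(x/2 + u y)² + (y/2 + u x)²` for a single real `u`, whose minimum is
`(x² + y²)/4 - x²y²/(x² + y²)`. The minimising `h`, supported on these entries, makes each `Cᵢ` a
multiple of a unitary, so that `α(h)` is scalar and the bound is attained. -/

open scoped Matrix.Norms.L2Operator

section OpNorm

variable {n : Type*} [Fintype n] [DecidableEq n]

lemma opNorm_eq_l2_opNorm {m : Type*} [Fintype m] (A : Matrix m n ℂ) : opNorm A = ‖A‖ := rfl

lemma opNorm_smul_one [Nonempty n] (c : ℂ) : opNorm (c • (1 : Matrix n n ℂ)) = ‖c‖ := by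
  rw [opNorm_eq_l2_opNorm, smul_one_eq_diagonal, l2_opNorm_diagonal, pi_norm_const]

lemma norm_diag_le_opNorm (A : Matrix n n ℂ) (j : n) : ‖A j j‖ ≤ opNorm A := by
  have hA := A.l2_opNorm_mulVec (EuclideanSpace.single j 1)
  rw [PiLp.norm_single, norm_one, mul_one] at hA
  rw [opNorm_eq_l2_opNorm]
  simpa using (PiLp.norm_apply_le _ j).trans hA

lemma re_trace_le_card_mul_opNorm (A : Matrix n n ℂ) :
    (trace A).re ≤ Fintype.card n * opNorm A := by
  rw [trace, Complex.re_sum, ← nsmul_eq_mul, ← Finset.card_univ, ← Finset.sum_const]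
  exact Finset.sum_le_sum fun j _ => (Complex.re_le_norm _).trans (norm_diag_le_opNorm A j)

end OpNorm

section Frame

variable {m n ι : Type*} [Fintype m] [Fintype ι] [DecidableEq ι]

lemma trace_conjTranspose_mul_self_sum_smul [Fintype n] (U : ι → Matrix m n ℂ) (D : ℂ)
    (hU : ∀ j k, trace ((U j)ᴴ * U k) = if j = k then D else 0) (c : ι → ℂ) :
    trace ((∑ j, c j • U j)ᴴ * ∑ j, c j • U j) = D * ∑ j, (Complex.normSq (c j) : ℂ) := by
  simp only [conjTranspose_sum, conjTranspose_smul, Matrix.sum_mul, Matrix.mul_sum,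
    Matrix.smul_mul, Matrix.mul_smul, trace_sum, trace_smul, hU, smul_ite, smul_zero,
    Complex.normSq_eq_conj_mul_self, Finset.mul_sum]
  simp [mul_comm, mul_left_comm]

lemma conjTranspose_mul_self_sum_smul_single [DecidableEq n] (U : ι → Matrix m n ℂ) (k : ι)
    (hU : (U k)ᴴ * U k = 1) (z : ℂ) :
    (∑ j, (Pi.single k z : ι → ℂ) j • U j)ᴴ * ∑ j, (Pi.single k z : ι → ℂ) j • U j
      = (Complex.normSq z : ℂ) • 1 := by
  simp [Pi.single_apply, hU, smul_smul, Complex.normSq_eq_conj_mul_self, mul_comm]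

end Frame

section KrausFrame

variable {d d' r : ℕ} (U : Fin r → Matrix (Fin d') (Fin d) ℂ) (s : Fin r → ℂ)
  (m h : Matrix (Fin r) (Fin r) ℂ)

lemma krausAlpha_of_frame :
    krausAlpha (fun j => s j • U j) (fun i => (-Complex.I) • ∑ j, m i j • U j) h
      = ∑ i, (∑ j, (h * diagonal s + m) i j • U j)ᴴ * ∑ j, (h * diagonal s + m) i j • U j := by
  refine Finset.sum_congr rfl fun i _ => ?_
  have hC : (-Complex.I) • ∑ j, m i j • U j - Complex.I • ∑ j, h i j • s j • U j
      = (-Complex.I) • ∑ j, (h * diagonal s + m) i j • U j := by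
    simp only [Matrix.add_apply, mul_diagonal, add_smul, mul_smul, Finset.sum_add_distrib,
      smul_add, Finset.smul_sum, neg_smul, sub_eq_add_neg, ← Finset.sum_neg_distrib]
    abel
  rw [hC, conjTranspose_smul, Matrix.smul_mul, Matrix.mul_smul, smul_smul]
  simp

lemma mul_sum_normSq_le_card_mul_opNorm_krausAlpha (D : ℝ)
    (hU : ∀ j k, trace ((U j)ᴴ * U k) = if j = k then (D : ℂ) else 0) :
    D * ∑ i, ∑ j, Complex.normSq ((h * diagonal s + m) i j)
      ≤ d * opNorm (krausAlpha (fun j => s j • U j) (fun i => (-Complex.I) • ∑ j, m i j • U j) h) := by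
  have htrace : (trace (krausAlpha (fun j => s j • U j)
      (fun i => (-Complex.I) • ∑ j, m i j • U j) h)).re
      = D * ∑ i, ∑ j, Complex.normSq ((h * diagonal s + m) i j) := by
    simp only [krausAlpha_of_frame, trace_sum, trace_conjTranspose_mul_self_sum_smul U _ hU,
      Complex.re_sum, ← Complex.ofReal_sum, Complex.re_ofReal_mul, Complex.ofReal_re,
      Finset.mul_sum]
  rw [← htrace]
  simpa using re_trace_le_card_mul_opNorm
    (krausAlpha (fun j => s j • U j) (fun i => (-Complex.I) • ∑ j, m i j • U j) h)

lemma krausAlpha_of_frame_eq_smul_one (hU : ∀ j, (U j)ᴴ * U j = 1) (τ : Fin r → Fin r)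
    (z : Fin r → ℂ) (hG : ∀ i, (h * diagonal s + m) i = Pi.single (τ i) (z i)) :
    krausAlpha (fun j => s j • U j) (fun i => (-Complex.I) • ∑ j, m i j • U j) h
      = ((∑ i, Complex.normSq (z i) : ℝ) : ℂ) • 1 := by
  simp only [krausAlpha_of_frame, hG, conjTranspose_mul_self_sum_smul_single U _ (hU _),
    ← Finset.sum_smul, Complex.ofReal_sum]

end KrausFrame

noncomputable def pairMin (x y : ℝ) : ℝ := (x ^ 2 + y ^ 2) / 4 - x ^ 2 * y ^ 2 / (x ^ 2 + y ^ 2)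

lemma isLeast_pairMin {x y : ℝ} (hxy : 0 < x ^ 2 + y ^ 2) :
    IsLeast (Set.range fun u => (x / 2 + u * y) ^ 2 + (y / 2 + u * x) ^ 2) (pairMin x y) := by
  refine ⟨⟨-(x * y / (x ^ 2 + y ^ 2)), ?_⟩, ?_⟩
  · rw [pairMin]
    field_simp
    ring
  · rintro _ ⟨u, rfl⟩
    have hsq : x ^ 2 * y ^ 2 / (x ^ 2 + y ^ 2) * (x ^ 2 + y ^ 2) = x ^ 2 * y ^ 2 :=
      div_mul_cancel₀ _ hxy.ne'
    rw [pairMin]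
    nlinarith [sq_nonneg (u * (x ^ 2 + y ^ 2) + x * y)]

noncomputable def pauliBasis : Fin 4 → Matrix (Fin 2) (Fin 2) ℂ := ![1, pauliX, pauliY, pauliZ]

lemma pauliBasis_conjTranspose_mul_self (j : Fin 4) : (pauliBasis j)ᴴ * pauliBasis j = 1 := by
  fin_cases j <;> ext a b <;> fin_cases a <;> fin_cases b <;>
    simp [pauliBasis, pauliX, pauliY, pauliZ, mul_apply, Fin.sum_univ_two]

lemma trace_pauliBasis_conjTranspose_mul (j k : Fin 4) :
    trace ((pauliBasis j)ᴴ * pauliBasis k) = if j = k then 2 else 0 := by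
  fin_cases j <;> fin_cases k <;>
    simp [pauliBasis, pauliX, pauliY, pauliZ, trace_fin_two, mul_apply, Fin.sum_univ_two] <;>
    norm_num

lemma Rz_mem_unitaryGroup (ω : ℝ) : Rz ω ∈ unitaryGroup (Fin 2) ℂ := by
  rw [mem_unitaryGroup_iff]
  ext a b
  fin_cases a <;> fin_cases b <;>
    simp [Rz, mul_apply, Fin.sum_univ_two, ← Complex.exp_conj, ← Complex.exp_add, map_ofNat] <;>
    ring_nf <;> exact Complex.exp_zero

noncomputable def pauliFrame (ω : ℝ) (j : Fin 4) : Matrix (Fin 2) (Fin 2) ℂ :=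
  pauliBasis j * Rz ω

lemma pauliFrame_conjTranspose_mul_self (ω : ℝ) (j : Fin 4) :
    (pauliFrame ω j)ᴴ * pauliFrame ω j = 1 := by
  have hR : (Rz ω)ᴴ * Rz ω = 1 := mem_unitaryGroup_iff'.mp (Rz_mem_unitaryGroup ω)
  rw [pauliFrame, conjTranspose_mul, Matrix.mul_assoc, ← Matrix.mul_assoc (pauliBasis j)ᴴ,
    pauliBasis_conjTranspose_mul_self, Matrix.one_mul, hR]

lemma trace_pauliFrame_conjTranspose_mul (ω : ℝ) (j k : Fin 4) :
    trace ((pauliFrame ω j)ᴴ * pauliFrame ω k) = if j = k then ((2 : ℝ) : ℂ) else 0 := by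
  have hR : Rz ω * (Rz ω)ᴴ = 1 := mem_unitaryGroup_iff.mp (Rz_mem_unitaryGroup ω)
  rw [pauliFrame, pauliFrame, conjTranspose_mul, Matrix.mul_assoc, trace_mul_comm,
    Matrix.mul_assoc, Matrix.mul_assoc, hR, Matrix.mul_one, trace_pauliBasis_conjTranspose_mul]
  norm_num

noncomputable def depolAmp (px py pz : ℝ) : Fin 4 → ℝ :=
  ![√(1 - (px + py + pz)), √px, √py, √pz]

noncomputable def depolDotCoef (s : Fin 4 → ℝ) : Matrix (Fin 4) (Fin 4) ℂ :=
  !![0, 0, 0, s 0 / 2;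
     0, 0, -Complex.I * s 1 / 2, 0;
     0, Complex.I * s 2 / 2, 0, 0;
     s 3 / 2, 0, 0, 0]

lemma depolK_eq (px py pz ω : ℝ) :
    depolK px py pz ω = fun j => (depolAmp px py pz j : ℂ) • pauliFrame ω j := by
  funext j
  fin_cases j <;> simp [depolK, depolAmp, pauliFrame, pauliBasis]

lemma depolKdot_eq (px py pz ω : ℝ) :
    depolKdot px py pz ω
      = fun i => (-Complex.I) • ∑ j, depolDotCoef (depolAmp px py pz) i j • pauliFrame ω j := by
  funext i
  fin_cases i <;>
    simp [depolKdot, depolDotCoef, depolAmp, pauliFrame, pauliBasis, Fin.sum_univ_four] <;>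
    match_scalars <;> ring_nf <;> simp [Complex.I_sq] <;> ring

noncomputable def depolMinimizer (u₁ u₂ : ℝ) : Matrix (Fin 4) (Fin 4) ℂ :=
  !![0, 0, 0, u₁;
     0, 0, -Complex.I * u₂, 0;
     0, Complex.I * u₂, 0, 0;
     u₁, 0, 0, 0]

lemma depolMinimizer_isHermitian (u₁ u₂ : ℝ) : (depolMinimizer u₁ u₂).IsHermitian := by
  ext i j
  fin_cases i <;> fin_cases j <;> simp [depolMinimizer]

section PauliFrame

variable (s : Fin 4 → ℝ) (ω : ℝ)

lemma krausAlpha_depolMinimizer (u₁ u₂ : ℝ) :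
    krausAlpha (fun j => (s j : ℂ) • pauliFrame ω j)
        (fun i => (-Complex.I) • ∑ j, depolDotCoef s i j • pauliFrame ω j) (depolMinimizer u₁ u₂)
      = ((((s 0 / 2 + u₁ * s 3) ^ 2 + (s 3 / 2 + u₁ * s 0) ^ 2)
          + ((s 1 / 2 + u₂ * s 2) ^ 2 + (s 2 / 2 + u₂ * s 1) ^ 2) : ℝ) : ℂ) • 1 := by
  rw [krausAlpha_of_frame_eq_smul_one (pauliFrame ω) _ _ _ (pauliFrame_conjTranspose_mul_self ω)
    ![3, 2, 1, 0]
    ![((s 0 / 2 + u₁ * s 3 : ℝ) : ℂ), -Complex.I * ((s 1 / 2 + u₂ * s 2 : ℝ) : ℂ),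
      Complex.I * ((s 2 / 2 + u₂ * s 1 : ℝ) : ℂ), ((s 3 / 2 + u₁ * s 0 : ℝ) : ℂ)]]
  · congr 2
    simp only [Fin.sum_univ_four, Matrix.cons_val, Complex.normSq_mul, Complex.normSq_neg,
      Complex.normSq_I, Complex.normSq_ofReal, one_mul]
    ring
  · intro i
    funext j
    simp only [Matrix.add_apply, Matrix.mul_diagonal]
    fin_cases i <;> fin_cases j <;> simp [depolMinimizer, depolDotCoef] <;> ring

lemma pairMin_add_pairMin_le_opNorm_krausAlpha (hs03 : 0 < s 0 ^ 2 + s 3 ^ 2)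
    (hs12 : 0 < s 1 ^ 2 + s 2 ^ 2) (h : Matrix (Fin 4) (Fin 4) ℂ) (hh : h.IsHermitian) :
    pairMin (s 0) (s 3) + pairMin (s 1) (s 2)
      ≤ opNorm (krausAlpha (fun j => (s j : ℂ) • pauliFrame ω j)
          (fun i => (-Complex.I) • ∑ j, depolDotCoef s i j • pauliFrame ω j) h) := by
  have hframe := mul_sum_normSq_le_card_mul_opNorm_krausAlpha (pauliFrame ω) (fun j => (s j : ℂ))
    (depolDotCoef s) h 2 (trace_pauliFrame_conjTranspose_mul ω)
  simp only [Nat.cast_ofNat] at hframe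
  set G := h * diagonal (fun j => (s j : ℂ)) + depolDotCoef s
  have hrows : Complex.normSq (G 0 3) + Complex.normSq (G 1 2) + Complex.normSq (G 2 1)
      + Complex.normSq (G 3 0) ≤ ∑ i, ∑ j, Complex.normSq (G i j) := by
    simpa [Fin.sum_univ_four] using Finset.sum_le_sum (s := Finset.univ) fun i _ =>
      Finset.single_le_sum (fun j _ => Complex.normSq_nonneg (G i j))
        (Finset.mem_univ (![3, 2, 1, 0] i))
  have h30 : h 3 0 = star (h 0 3) := (hh.apply 3 0).symm
  have h21 : h 2 1 = star (h 1 2) := (hh.apply 2 1).symm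
  have hG03 : (G 0 3).re = s 0 / 2 + (h 0 3).re * s 3 := by
    simp [G, depolDotCoef]; ring
  have hG30 : (G 3 0).re = s 3 / 2 + (h 0 3).re * s 0 := by
    simp [G, depolDotCoef, h30]; ring
  have hG12 : (G 1 2).im = -(s 1 / 2 + -(h 1 2).im * s 2) := by
    simp [G, depolDotCoef]; ring
  have hG21 : (G 2 1).im = s 2 / 2 + -(h 1 2).im * s 1 := by
    simp [G, depolDotCoef, h21]; ring
  have e03 := hG03 ▸ Complex.re_sq_le_normSq (G 0 3)
  have e30 := hG30 ▸ Complex.re_sq_le_normSq (G 3 0)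
  have e12 := hG12 ▸ Complex.im_sq_le_normSq (G 1 2)
  have e21 := hG21 ▸ Complex.im_sq_le_normSq (G 2 1)
  have hpair03 := (isLeast_pairMin hs03).2 ⟨(h 0 3).re, rfl⟩
  have hpair12 := (isLeast_pairMin hs12).2 ⟨-(h 1 2).im, rfl⟩
  linarith

lemma isLeast_opNorm_krausAlpha_pauliFrame (hs03 : 0 < s 0 ^ 2 + s 3 ^ 2)
    (hs12 : 0 < s 1 ^ 2 + s 2 ^ 2) :
    IsLeast {x : ℝ | ∃ h : Matrix (Fin 4) (Fin 4) ℂ, h.IsHermitian ∧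
        x = 4 * opNorm (krausAlpha (fun j => (s j : ℂ) • pauliFrame ω j)
          (fun i => (-Complex.I) • ∑ j, depolDotCoef s i j • pauliFrame ω j) h)}
      (4 * (pairMin (s 0) (s 3) + pairMin (s 1) (s 2))) := by
  refine ⟨?_, ?_⟩
  · obtain ⟨u₁, hu₁⟩ := (isLeast_pairMin hs03).1
    obtain ⟨u₂, hu₂⟩ := (isLeast_pairMin hs12).1
    refine ⟨depolMinimizer u₁ u₂, depolMinimizer_isHermitian u₁ u₂, ?_⟩
    rw [krausAlpha_depolMinimizer, opNorm_smul_one, Complex.norm_real,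
      Real.norm_of_nonneg (by positivity), ← hu₁, ← hu₂]
  · rintro _ ⟨h, hh, rfl⟩
    linarith [pairMin_add_pairMin_le_opNorm_krausAlpha s ω hs03 hs12 h hh]

end PauliFrame

/-- Single-channel quantum Fisher information of the depolarizing channel:
`inf_h 4‖α(h)‖ = 1 − 4(p_x p_y/(p_x+p_y) + (1−p)p_z/(1−p+p_z))` where `p = p_x+p_y+p_z`. -/
theorem depolarizing_single_channel_QFI (px py pz ω : ℝ)
    (hx : 0 ≤ px) (hy : 0 ≤ py) (hz : 0 ≤ pz)
    (hxy : 0 < px + py) (hp : px + py + pz < 1) :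
    sInf {x : ℝ | ∃ h : Matrix (Fin 4) (Fin 4) ℂ, h.IsHermitian ∧
        x = 4 * opNorm (krausAlpha (depolK px py pz ω) (depolKdot px py pz ω) h)}
      = 1 - 4 * (px * py / (px + py) +
          (1 - (px + py + pz)) * pz / (1 - (px + py + pz) + pz)) := by
  have hs0 : depolAmp px py pz 0 ^ 2 = 1 - (px + py + pz) := Real.sq_sqrt (by linarith)
  have hs1 : depolAmp px py pz 1 ^ 2 = px := Real.sq_sqrt hx
  have hs2 : depolAmp px py pz 2 ^ 2 = py := Real.sq_sqrt hy
  have hs3 : depolAmp px py pz 3 ^ 2 = pz := Real.sq_sqrt hz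
  have hs03 : 0 < depolAmp px py pz 0 ^ 2 + depolAmp px py pz 3 ^ 2 := by rw [hs0, hs3]; linarith
  have hs12 : 0 < depolAmp px py pz 1 ^ 2 + depolAmp px py pz 2 ^ 2 := by rw [hs1, hs2]; linarith
  rw [depolK_eq, depolKdot_eq, (isLeast_opNorm_krausAlpha_pauliFrame _ ω hs03 hs12).csInf_eq,
    pairMin, pairMin, hs0, hs1, hs2, hs3]
  ring
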